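/- arXiv:2405.07968 — 2 statements merged into one kernel-verified Lean document; each statement's English description precedes it below -/
import Mathlib

section
/- With the notation of the context: rank of the block matrix [F_{n,[ℰ,Â]} 𝒜; 0 𝒞; 0 F_{n,[Ē,Ā]}; 0 𝒦] equals rank of [F_{n,[ℰ,Â]} 𝒜; 0 𝒞; 0 F_{n,[Ē,Ā]}] if and only if A⁻¹(E·V^{n−1}_{[E,A,B,0]}) ∩ W*_{[E,A,0,C]} ⊆ ker K. -/
open Matrix

/-- The block matrix `F_{k,[E,A]}`: viewed as a `k × k` array of `m × n` blocks,
diagonal blocks equal `E`, superdiagonal blocks equal `A`, all other blocks zero. -/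
noncomputable def Fmat (k : ℕ) {R C : Type*} [Fintype R] [Fintype C]
    (E A : Matrix R C ℝ) : Matrix (Fin k × R) (Fin k × C) ℝ :=
  Matrix.of fun p q =>
    if q.1.val = p.1.val then E p.2 q.2
    else if q.1.val = p.1.val + 1 then A p.2 q.2
    else 0

/-- The matrix `F_{k,[E,A,K]}`: `F_{k,[E,A]}` with an extra block row appended at the
bottom, having `K` in the second block column and zeros elsewhere. -/
noncomputable def FmatK (k : ℕ) {R C : Type*} [Fintype R] [Fintype C] {r : ℕ}
    (E A : Matrix R C ℝ) (K : Matrix (Fin r) C ℝ) :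
    Matrix ((Fin k × R) ⊕ Fin r) (Fin k × C) ℝ :=
  Matrix.of fun p q =>
    match p with
    | Sum.inl pr => Fmat k E A pr q
    | Sum.inr i => if q.1.val = 1 then K i q.2 else 0

/-- The generalized Wong sequence `W^i_{[E,A,B,C]}`:
`W⁰ = {0}`, `W^{i+1} = E⁻¹(A·W^i + im B) ∩ ker C`. -/
noncomputable def WongW {R : Type*} [Fintype R] {n l p : ℕ}
    (E A : Matrix R (Fin n) ℝ) (B : Matrix R (Fin l) ℝ) (C : Matrix (Fin p) (Fin n) ℝ) :
    ℕ → Submodule ℝ (Fin n → ℝ)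
  | 0 => ⊥
  | i + 1 =>
      (Submodule.comap E.mulVecLin
        (Submodule.map A.mulVecLin (WongW E A B C i) ⊔ LinearMap.range B.mulVecLin)) ⊓
        LinearMap.ker C.mulVecLin

/-- The generalized Wong sequence `V^i_{[E,A,B,C]}`:
`V⁰ = ker C`, `V^{i+1} = A⁻¹(E·V^i + im B) ∩ ker C`. -/
noncomputable def WongV {R : Type*} [Fintype R] {n l p : ℕ}
    (E A : Matrix R (Fin n) ℝ) (B : Matrix R (Fin l) ℝ) (C : Matrix (Fin p) (Fin n) ℝ) :
    ℕ → Submodule ℝ (Fin n → ℝ)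
  | 0 => LinearMap.ker C.mulVecLin
  | i + 1 =>
      (Submodule.comap A.mulVecLin
        (Submodule.map E.mulVecLin (WongV E A B C i) ⊔ LinearMap.range B.mulVecLin)) ⊓
        LinearMap.ker C.mulVecLin

/-- The block matrix `𝒜`, an `n × n` array of `m × n` blocks with `A` in block
position `(n,1)` and zeros elsewhere. -/
noncomputable def calA {m n : ℕ} (A : Matrix (Fin m) (Fin n) ℝ) :
    Matrix (Fin n × Fin m) (Fin n × Fin n) ℝ :=
  Matrix.of fun p q => if p.1.val = n - 1 ∧ q.1.val = 0 then A p.2 q.2 else 0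

/-- The block column `𝒜₁`, an `n × 1` array of `m × n` blocks with `A` in the bottom
block and zeros above. -/
noncomputable def calA1 {m n : ℕ} (A : Matrix (Fin m) (Fin n) ℝ) :
    Matrix (Fin n × Fin m) (Fin n) ℝ :=
  Matrix.of fun p j => if p.1.val = n - 1 then A p.2 j else 0

/-- The block row `[K 0 … 0]` (`k` block columns) with `K` in the first block column. -/
noncomputable def firstBlockCol {r n : ℕ} (k : ℕ) (K : Matrix (Fin r) (Fin n) ℝ) :
    Matrix (Fin r) (Fin k × Fin n) ℝ :=
  Matrix.of fun i q => if q.1.val = 0 then K i q.2 else 0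

/-!
The rank condition says that appending the rows `[0 𝒦]` does not shrink the kernel of the
stacked matrix, i.e. that `K` kills the first block `z₀` of the second component of every kernel
vector. A kernel vector consists of two chains: `(x_i, w_i)` with
`E x_i + A x_{i+1} + B w_{i+1} = 0`, closed off by `E x_{n-1} + A z₀ = 0`, and `z_j` with
`E z_j + A z_{j+1} = 0`, `C z_j = 0` and `z_n = 0`. Unfolding the recursions, the chains ending
in `x` are exactly the witnesses of `x ∈ V^k_{[E,A,B,0]}` and those starting at `z` the witnesses
of `z ∈ W^k_{[E,A,0,C]}`, so the possible `z₀` form `A⁻¹(E·V^{n-1}) ∩ W^n`. Finally `W^n = W*`,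
since an increasing chain of subspaces of `ℝⁿ` produced by iterating a monotone map is constant
from step `n` on.
-/

theorem Sum.elim_eq_zero_iff {α β γ : Type*} [Zero γ] {f : α → γ} {g : β → γ} :
    Sum.elim f g = 0 ↔ f = 0 ∧ g = 0 := by
  rw [← Sum.elim_zero_zero, Sum.elim_eq_iff]

section Rank
variable {K α β γ : Type*} [Field K] [Fintype β]

theorem Matrix.rank_eq_rank_iff_ker_eq_of_ker_le {M : Matrix α β K} {M' : Matrix γ β K}
    (h : LinearMap.ker M'.mulVecLin ≤ LinearMap.ker M.mulVecLin) :
    M'.rank = M.rank ↔ LinearMap.ker M'.mulVecLin = LinearMap.ker M.mulVecLin := by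
  have hM := LinearMap.finrank_range_add_finrank_ker M.mulVecLin
  have hM' := LinearMap.finrank_range_add_finrank_ker M'.mulVecLin
  refine ⟨fun hr => Submodule.eq_of_le_of_finrank_eq h ?_, fun hk => ?_⟩
  · rw [Matrix.rank, Matrix.rank] at hr; omega
  · rw [hk] at hM'; rw [Matrix.rank, Matrix.rank]; omega

variable {δ ε ζ : Type*} [Fintype δ]

theorem Matrix.ker_fromBlocks_zero_fromRows_fromRows (P : Matrix α β K) (Q : Matrix α δ K)
    (S : Matrix γ δ K) (T : Matrix ε δ K) (U : Matrix ζ δ K) :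
    LinearMap.ker (Matrix.fromBlocks P Q 0 (Matrix.fromRows S (Matrix.fromRows T U))).mulVecLin =
      LinearMap.ker (Matrix.fromBlocks P Q 0 (Matrix.fromRows S T)).mulVecLin ⊓
        (LinearMap.ker U.mulVecLin).comap (LinearMap.funLeft K K Sum.inr) := by
  ext v
  simp only [LinearMap.mem_ker, Submodule.mem_inf, Submodule.mem_comap, Matrix.mulVecLin_apply,
    Matrix.fromBlocks_mulVec, Matrix.zero_mulVec, zero_add, Matrix.fromRows_mulVec,
    Sum.elim_eq_zero_iff, and_assoc]
  rfl

end Rank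

section Stabilization
variable {K V : Type*} [DivisionRing K] [AddCommGroup V] [Module K V] [FiniteDimensional K V]

theorem Submodule.iterate_bot_le_iterate_finrank {f : Submodule K V → Submodule K V}
    (hf : Monotone f) (k : ℕ) : f^[k] ⊥ ≤ f^[Module.finrank K V] ⊥ := by
  set N := Module.finrank K V
  have hmono : Monotone fun i => f^[i] ⊥ := hf.monotone_iterate_of_le_map bot_le
  obtain ⟨j, hjN, hfix⟩ : ∃ j ≤ N, f (f^[j] ⊥) = f^[j] ⊥ := by
    by_contra! hne
    have hgrow : ∀ j ≤ N + 1, j ≤ Module.finrank K (f^[j] ⊥) := by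
      intro j hj
      induction j with
      | zero => exact Nat.zero_le _
      | succ j ih =>
        have hlt : f^[j] ⊥ < f^[j + 1] ⊥ := by
          refine lt_of_le_of_ne (hmono j.le_succ) ?_
          rw [Function.iterate_succ_apply']
          exact (hne j (by omega)).symm
        have := Submodule.finrank_lt_finrank_of_lt hlt
        have := ih (by omega)
        omega
    have := hgrow (N + 1) le_rfl
    have := Submodule.finrank_le (f^[N + 1] ⊥)
    omega
  rcases le_total k N with hk | hk
  · exact hmono hk
  · calc f^[k] ⊥ = f^[k - j] (f^[j] ⊥) := by rw [← Function.iterate_add_apply]; congr; omega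
      _ = f^[j] ⊥ := Function.iterate_fixed hfix _
      _ ≤ f^[N] ⊥ := hmono hjN

theorem Submodule.iSup_iterate_bot {f : Submodule K V → Submodule K V} (hf : Monotone f) :
    ⨆ k, f^[k] ⊥ = f^[Module.finrank K V] ⊥ :=
  le_antisymm (iSup_le (iterate_bot_le_iterate_finrank hf)) (le_iSup (fun k => f^[k] ⊥) _)

end Stabilization

section BlockVectors
variable {k : ℕ} {R ι : Type*}

-- Blocks past the end read as zero, so the last block row of `Fmat` needs no special case.
def blockSeq [Zero R] (u : Fin k × ι → R) (i : ℕ) : ι → R :=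
  fun t => if h : i < k then u (⟨i, h⟩, t) else 0

theorem blockSeq_of_le [Zero R] (u : Fin k × ι → R) {i : ℕ} (hi : k ≤ i) : blockSeq u i = 0 := by
  funext t; simp [blockSeq, not_lt.mpr hi]

theorem blockSeq_eq_of_lt [Zero R] (u : Fin k × ι → R) {i : ℕ} (hi : i < k) :
    blockSeq u i = fun t => u (⟨i, hi⟩, t) := by
  funext t; simp [blockSeq, hi]

theorem blockSeq_uncurry_of_lt [Zero R] (Y : ℕ → ι → R) {i : ℕ} (hi : i < k) :
    blockSeq (fun q : Fin k × ι => Y q.1 q.2) i = Y i :=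
  blockSeq_eq_of_lt _ hi

theorem blockSeq_apply_eq_sum [AddCommMonoid R] (u : Fin k × ι → R) (i : ℕ) (t : ι) :
    blockSeq u i t = ∑ j : Fin k, if (j : ℕ) = i then u (j, t) else 0 := by
  unfold blockSeq
  split_ifs with h
  · simp_rw [← Fin.ext_iff (b := ⟨i, h⟩)]
    simp
  · refine (Finset.sum_eq_zero fun j _ => if_neg ?_).symm
    omega

theorem mulVec_blockSeq_apply [Fintype ι] [NonUnitalNonAssocSemiring R] {σ : Type*}
    (M : Matrix σ ι R) (u : Fin k × ι → R) (i : ℕ) (s : σ) :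
    (M *ᵥ blockSeq u i) s = ∑ j : Fin k, ∑ t, if (j : ℕ) = i then M s t * u (j, t) else 0 := by
  simp only [Matrix.mulVec, dotProduct, blockSeq_apply_eq_sum, Finset.mul_sum, mul_ite, mul_zero]
  exact Finset.sum_comm

theorem Matrix.mulVec_prod_apply [Fintype ι] [NonUnitalNonAssocSemiring R] {σ : Type*}
    (M : Matrix σ (Fin k × ι) R) (u : Fin k × ι → R) (s : σ) :
    (M *ᵥ u) s = ∑ j : Fin k, ∑ t, M s (j, t) * u (j, t) :=
  Fintype.sum_prod_type _

variable [Fintype ι]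

theorem Fmat_mulVec_apply {σ : Type*} [Fintype σ] (E A : Matrix σ ι ℝ) (u : Fin k × ι → ℝ)
    (i : Fin k) (s : σ) :
    (Fmat k E A *ᵥ u) (i, s) = (E *ᵥ blockSeq u i + A *ᵥ blockSeq u (i + 1)) s := by
  rw [Pi.add_apply, mulVec_blockSeq_apply, mulVec_blockSeq_apply, Matrix.mulVec_prod_apply,
    ← Finset.sum_add_distrib]
  refine Finset.sum_congr rfl fun j _ => ?_
  rw [← Finset.sum_add_distrib]
  refine Finset.sum_congr rfl fun t _ => ?_
  simp only [Fmat, Matrix.of_apply]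
  split_ifs <;> first | omega | simp

theorem firstBlockCol_mulVec {r n : ℕ} (K : Matrix (Fin r) (Fin n) ℝ) (u : Fin k × Fin n → ℝ) :
    firstBlockCol k K *ᵥ u = K *ᵥ blockSeq u 0 := by
  funext s
  rw [mulVec_blockSeq_apply, Matrix.mulVec_prod_apply]
  refine Finset.sum_congr rfl fun j _ => Finset.sum_congr rfl fun t _ => ?_
  simp only [firstBlockCol, Matrix.of_apply]
  split_ifs <;> simp

theorem calA_mulVec_apply {m n : ℕ} (A : Matrix (Fin m) (Fin n) ℝ) (z : Fin n × Fin n → ℝ)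
    (i : Fin n) (s : Fin m) :
    (calA A *ᵥ z) (i, s) = if (i : ℕ) = n - 1 then (A *ᵥ blockSeq z 0) s else 0 := by
  rw [Matrix.mulVec_prod_apply]
  split_ifs with hi
  · rw [mulVec_blockSeq_apply]
    refine Finset.sum_congr rfl fun j _ => Finset.sum_congr rfl fun t _ => ?_
    simp only [calA, Matrix.of_apply]
    split_ifs <;> simp_all
  · exact Finset.sum_eq_zero fun j _ => Finset.sum_eq_zero fun t _ => by simp [calA, hi]

end BlockVectors

section BlockKernels
variable {k : ℕ} {ι σ : Type*} [Fintype ι] [Fintype σ]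

theorem Fmat_mulVec_eq_zero_iff (E A : Matrix σ ι ℝ) (u : Fin k × ι → ℝ) :
    Fmat k E A *ᵥ u = 0 ↔ ∀ i < k, E *ᵥ blockSeq u i + A *ᵥ blockSeq u (i + 1) = 0 := by
  simp only [funext_iff, Prod.forall, Fmat_mulVec_apply, Pi.zero_apply, Fin.forall_iff]

theorem Fmat_mulVec_add_calA_mulVec_eq_zero_iff {m n : ℕ} (hn : 0 < n)
    (E' A' : Matrix (Fin m) ι ℝ) (A : Matrix (Fin m) (Fin n) ℝ) (u : Fin n × ι → ℝ)
    (z : Fin n × Fin n → ℝ) :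
    Fmat n E' A' *ᵥ u + calA A *ᵥ z = 0 ↔
      (∀ i < n - 1, E' *ᵥ blockSeq u i + A' *ᵥ blockSeq u (i + 1) = 0) ∧
        E' *ᵥ blockSeq u (n - 1) + A *ᵥ blockSeq z 0 = 0 := by
  have hYn : blockSeq u (n - 1 + 1) = 0 := blockSeq_of_le u (by omega)
  simp only [funext_iff, Prod.forall, Pi.add_apply, Fmat_mulVec_apply, calA_mulVec_apply,
    Pi.zero_apply]
  constructor
  · intro h
    refine ⟨fun i hi s => ?_, fun s => ?_⟩
    · simpa [show i ≠ n - 1 by omega] using h ⟨i, by omega⟩ s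
    · simpa [hYn] using h ⟨n - 1, by omega⟩ s
  · rintro ⟨hinit, hlast⟩ i s
    split_ifs with hi
    · simpa [hi, hYn] using hlast s
    · simpa using hinit i (by omega) s

theorem ker_firstBlockCol {r n : ℕ} (hk : 0 < k) (K : Matrix (Fin r) (Fin n) ℝ) :
    LinearMap.ker (firstBlockCol k K).mulVecLin =
      (LinearMap.ker K.mulVecLin).comap (LinearMap.funLeft ℝ ℝ fun t => (⟨0, hk⟩, t)) := by
  ext u
  simp only [LinearMap.mem_ker, Matrix.mulVecLin_apply, Submodule.mem_comap,
    firstBlockCol_mulVec, blockSeq_eq_of_lt u hk]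
  rfl

end BlockKernels

section Wong
variable {σ : Type*} [Fintype σ] {n l p : ℕ} (E A : Matrix σ (Fin n) ℝ)
  (B : Matrix σ (Fin l) ℝ) (C : Matrix (Fin p) (Fin n) ℝ)

theorem mem_wongW_succ (k : ℕ) (z : Fin n → ℝ) :
    z ∈ WongW E A B C (k + 1) ↔
      (∃ z' ∈ WongW E A B C k, ∃ w, A *ᵥ z' + B *ᵥ w = E *ᵥ z) ∧ C *ᵥ z = 0 := by
  simp [WongW, Submodule.mem_sup]

theorem mem_wongV_succ (k : ℕ) (x : Fin n → ℝ) :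
    x ∈ WongV E A B C (k + 1) ↔
      (∃ x' ∈ WongV E A B C k, ∃ w, E *ᵥ x' + B *ᵥ w = A *ᵥ x) ∧ C *ᵥ x = 0 := by
  simp [WongV, Submodule.mem_sup]

theorem wongW_eq_iterate (k : ℕ) :
    WongW E A B C k =
      (fun W => (Submodule.map A.mulVecLin W ⊔ LinearMap.range B.mulVecLin).comap E.mulVecLin ⊓
        LinearMap.ker C.mulVecLin)^[k] ⊥ := by
  induction k with
  | zero => rfl
  | succ k ih => rw [Function.iterate_succ_apply', ← ih]; rfl

theorem iSup_wongW : ⨆ k, WongW E A B C k = WongW E A B C n := by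
  simp only [wongW_eq_iterate]
  rw [Submodule.iSup_iterate_bot, Module.finrank_fin_fun]
  intro W W' h
  exact inf_le_inf_right _ (Submodule.comap_mono (sup_le_sup_right (Submodule.map_mono h) _))

theorem mem_wongW_zero_iff (k : ℕ) (z : Fin n → ℝ) :
    z ∈ WongW E A (0 : Matrix σ (Fin l) ℝ) C k ↔
      ∃ Z : ℕ → Fin n → ℝ, Z 0 = z ∧ Z k = 0 ∧ C *ᵥ Z 0 = 0 ∧
        ∀ j < k, E *ᵥ Z j + A *ᵥ Z (j + 1) = 0 ∧ C *ᵥ Z (j + 1) = 0 := by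
  induction k generalizing z with
  | zero =>
    refine ⟨fun hz => ⟨fun _ => z, rfl, by simpa [WongW] using hz, by simp_all [WongW], by simp⟩,
      ?_⟩
    rintro ⟨Z, rfl, hZ0, -⟩
    simp [WongW, hZ0]
  | succ k ih =>
    simp only [mem_wongW_succ, Matrix.zero_mulVec, add_zero, exists_const]
    constructor
    · rintro ⟨⟨z', hz', hAz'⟩, hCz⟩
      obtain ⟨Z, hZ0, hZk, hCZ0, hchain⟩ := (ih (-z')).mp (neg_mem hz')
      refine ⟨fun j => Nat.casesOn j z Z, rfl, hZk, hCz, fun j hj => ?_⟩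
      cases j with
      | zero =>
        show E *ᵥ z + A *ᵥ Z 0 = 0 ∧ C *ᵥ Z 0 = 0
        rw [hZ0, Matrix.mulVec_neg, hAz', add_neg_cancel]
        exact ⟨rfl, hZ0 ▸ hCZ0⟩
      | succ j => exact hchain j (by omega)
    · rintro ⟨Z, rfl, hZk, hCZ0, hchain⟩
      have htail : Z 1 ∈ WongW E A 0 C k :=
        (ih (Z 1)).mpr ⟨fun j => Z (j + 1), rfl, hZk, (hchain 0 (by omega)).2,
          fun j hj => hchain (j + 1) (by omega)⟩
      refine ⟨⟨-Z 1, neg_mem htail, ?_⟩, hCZ0⟩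
      rw [Matrix.mulVec_neg, neg_eq_iff_add_eq_zero, add_comm]
      exact (hchain 0 (by omega)).1

theorem mem_wongV_zero_iff (k : ℕ) (x : Fin n → ℝ) :
    x ∈ WongV E A B (0 : Matrix (Fin p) (Fin n) ℝ) k ↔
      ∃ Y : ℕ → Fin n ⊕ Fin l → ℝ, Y k ∘ Sum.inl = x ∧
        ∀ i < k, Matrix.fromCols E 0 *ᵥ Y i + Matrix.fromCols A B *ᵥ Y (i + 1) = 0 := by
  induction k generalizing x with
  | zero =>
    simp only [not_lt_zero, false_imp_iff, implies_true, and_true]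
    refine ⟨fun _ => ⟨fun _ => Sum.elim x 0, rfl⟩, fun _ => ?_⟩
    simp [WongV]
  | succ k ih =>
    simp only [mem_wongV_succ, Matrix.zero_mulVec, and_true]
    constructor
    · rintro ⟨x', hx', w, hAx⟩
      obtain ⟨Y, hYk, hchain⟩ := (ih (-x')).mp (neg_mem hx')
      refine ⟨Function.update Y (k + 1) (Sum.elim x (-w)), by simp, fun i hi => ?_⟩
      rcases Nat.lt_succ_iff_lt_or_eq.mp hi with hi | rfl
      · simpa [Function.update_of_ne (show i ≠ k + 1 by omega),
          Function.update_of_ne (show i + 1 ≠ k + 1 by omega)] using hchain i hi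
      · rw [Function.update_of_ne (show i ≠ i + 1 by omega), Function.update_self,
          Matrix.fromCols_mulVec, Matrix.fromCols_mulVec, hYk, Sum.elim_comp_inl,
          Sum.elim_comp_inr, Matrix.zero_mulVec, add_zero, Matrix.mulVec_neg, Matrix.mulVec_neg]
        linear_combination -hAx
    · rintro ⟨Y, rfl, hchain⟩
      have hprev : Y k ∘ Sum.inl ∈ WongV E A B 0 k :=
        (ih _).mpr ⟨Y, rfl, fun i hi => hchain i (by omega)⟩
      refine ⟨-(Y k ∘ Sum.inl), neg_mem hprev, -(Y (k + 1) ∘ Sum.inr), ?_⟩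
      have := hchain k (by omega)
      simp only [Matrix.fromCols_mulVec, Matrix.zero_mulVec, add_zero] at this
      rw [Matrix.mulVec_neg, Matrix.mulVec_neg]
      linear_combination -this

end Wong

section PencilStack
variable {m n l p q : ℕ} (E A : Matrix (Fin m) (Fin n) ℝ) (B : Matrix (Fin m) (Fin l) ℝ)
  (C : Matrix (Fin p) (Fin n) ℝ)

noncomputable def pencilStack :
    Matrix ((Fin n × Fin m) ⊕ (Fin p ⊕ Fin n × (Fin m ⊕ Fin p)))
      ((Fin n × (Fin n ⊕ Fin l)) ⊕ Fin n × Fin n) ℝ :=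
  Matrix.fromBlocks (Fmat n (Matrix.fromCols E 0) (Matrix.fromCols A B)) (calA A) 0
    (Matrix.fromRows (firstBlockCol n C) (Fmat n (Matrix.fromRows E 0) (Matrix.fromRows A C)))

theorem pencilStack_mulVec_eq_zero_iff (hn : 0 < n) (u : Fin n × (Fin n ⊕ Fin l) → ℝ)
    (z : Fin n × Fin n → ℝ) :
    pencilStack E A B C *ᵥ Sum.elim u z = 0 ↔
      (∀ i < n - 1, Matrix.fromCols E 0 *ᵥ blockSeq u i +
          Matrix.fromCols A B *ᵥ blockSeq u (i + 1) = 0) ∧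
        Matrix.fromCols E 0 *ᵥ blockSeq u (n - 1) + A *ᵥ blockSeq z 0 = 0 ∧
        C *ᵥ blockSeq z 0 = 0 ∧
        ∀ j < n, E *ᵥ blockSeq z j + A *ᵥ blockSeq z (j + 1) = 0 ∧ C *ᵥ blockSeq z (j + 1) = 0 := by
  simp only [pencilStack, Matrix.fromBlocks_mulVec, Sum.elim_comp_inl, Sum.elim_comp_inr,
    Matrix.zero_mulVec, zero_add, Matrix.fromRows_mulVec, Sum.elim_eq_zero_iff,
    Fmat_mulVec_add_calA_mulVec_eq_zero_iff hn, firstBlockCol_mulVec, Fmat_mulVec_eq_zero_iff,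
    ← Sum.elim_add_add, forall_and]
  tauto

theorem map_ker_pencilStack (hn : 0 < n) :
    (LinearMap.ker (pencilStack E A B C).mulVecLin).map
        ((LinearMap.funLeft ℝ ℝ fun t => (⟨0, hn⟩, t)) ∘ₗ LinearMap.funLeft ℝ ℝ Sum.inr) =
      (Submodule.map E.mulVecLin
          (WongV E A B (0 : Matrix (Fin q) (Fin n) ℝ) (n - 1))).comap A.mulVecLin ⊓
        WongW E A (0 : Matrix (Fin m) (Fin q) ℝ) C n := by
  ext z
  simp only [Submodule.mem_map, Submodule.mem_inf, Submodule.mem_comap, LinearMap.mem_ker,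
    Matrix.mulVecLin_apply]
  constructor
  · rintro ⟨v, hv, rfl⟩
    rw [← Sum.elim_comp_inl_inr v, pencilStack_mulVec_eq_zero_iff E A B C hn] at hv
    obtain ⟨hinit, hlast, hCZ, hZchain⟩ := hv
    set Y := blockSeq (v ∘ Sum.inl)
    set Z := blockSeq (v ∘ Sum.inr)
    have hZ0 : ((LinearMap.funLeft ℝ ℝ fun t => (⟨0, hn⟩, t)) ∘ₗ
        LinearMap.funLeft ℝ ℝ Sum.inr) v = Z 0 :=
      (blockSeq_eq_of_lt (v ∘ Sum.inr) hn).symm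
    rw [hZ0]
    refine ⟨⟨-(Y (n - 1) ∘ Sum.inl),
      neg_mem ((mem_wongV_zero_iff E A B (n - 1) _).mpr ⟨Y, rfl, hinit⟩), ?_⟩,
      (mem_wongW_zero_iff E A C n _).mpr ⟨Z, rfl, blockSeq_of_le _ le_rfl, hCZ, hZchain⟩⟩
    rw [Matrix.fromCols_mulVec, Matrix.zero_mulVec, add_zero] at hlast
    rw [Matrix.mulVec_neg, neg_eq_iff_add_eq_zero]
    exact hlast
  · rintro ⟨⟨x, hx, hEx⟩, hW⟩
    obtain ⟨Y, hY, hYchain⟩ := (mem_wongV_zero_iff E A B (n - 1) _).mp (neg_mem hx)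
    obtain ⟨Z, rfl, hZn, hCZ, hZchain⟩ := (mem_wongW_zero_iff E A C n _).mp hW
    have hZ : ∀ j ≤ n, blockSeq (fun q : Fin n × Fin n => Z q.1 q.2) j = Z j := by
      intro j hj
      rcases hj.lt_or_eq with hj | rfl
      · exact blockSeq_uncurry_of_lt Z hj
      · rw [hZn, blockSeq_of_le _ le_rfl]
    refine ⟨Sum.elim (fun q => Y q.1 q.2) (fun q => Z q.1 q.2), ?_, ?_⟩
    · rw [pencilStack_mulVec_eq_zero_iff E A B C hn]
      refine ⟨fun i hi => ?_, ?_, ?_, fun j hj => ?_⟩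
      · rw [blockSeq_uncurry_of_lt Y (by omega), blockSeq_uncurry_of_lt Y (by omega)]
        exact hYchain i hi
      · rw [blockSeq_uncurry_of_lt Y (by omega), hZ 0 (Nat.zero_le n), Matrix.fromCols_mulVec,
          Matrix.zero_mulVec, add_zero, hY, Matrix.mulVec_neg, hEx, neg_add_cancel]
      · rw [hZ 0 (Nat.zero_le n)]
        exact hCZ
      · rw [hZ j hj.le, hZ (j + 1) hj]
        exact hZchain j hj
    · exact (hZ 0 (Nat.zero_le n) ▸ blockSeq_eq_of_lt _ hn).symm

end PencilStack

/-- Equivalence of statements (i) and (iv) of Theorem 3.10: the rank condition (3.14b)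
holds iff `A⁻¹(E·V^{n−1}_{[E,A,B,0]}) ∩ W*_{[E,A,0,C]} ⊆ ker K`. -/
theorem stmt_9 {m n l p r : ℕ} (hn : 1 ≤ n)
    (E A : Matrix (Fin m) (Fin n) ℝ) (B : Matrix (Fin m) (Fin l) ℝ)
    (C : Matrix (Fin p) (Fin n) ℝ) (K : Matrix (Fin r) (Fin n) ℝ) :
    (Matrix.fromBlocks
        (Fmat n (Matrix.fromCols E (0 : Matrix (Fin m) (Fin l) ℝ))
          (Matrix.fromCols A B))
        (calA A) 0
        (Matrix.fromRows (firstBlockCol n C)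
          (Matrix.fromRows
            (Fmat n (Matrix.fromRows E (0 : Matrix (Fin p) (Fin n) ℝ))
              (Matrix.fromRows A C))
            (firstBlockCol n K)))).rank =
      (Matrix.fromBlocks
        (Fmat n (Matrix.fromCols E (0 : Matrix (Fin m) (Fin l) ℝ))
          (Matrix.fromCols A B))
        (calA A) 0
        (Matrix.fromRows (firstBlockCol n C)
          (Fmat n (Matrix.fromRows E (0 : Matrix (Fin p) (Fin n) ℝ))
            (Matrix.fromRows A C)))).rank ↔
    Submodule.comap A.mulVecLin
        (Submodule.map E.mulVecLin
          (WongV E A B (0 : Matrix (Fin 1) (Fin n) ℝ) (n - 1))) ⊓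
      (⨆ i, WongW E A (0 : Matrix (Fin m) (Fin 1) ℝ) C i) ≤
    LinearMap.ker K.mulVecLin := by
  have hker := Matrix.ker_fromBlocks_zero_fromRows_fromRows
    (Fmat n (Matrix.fromCols E (0 : Matrix (Fin m) (Fin l) ℝ)) (Matrix.fromCols A B)) (calA A)
    (firstBlockCol n C)
    (Fmat n (Matrix.fromRows E (0 : Matrix (Fin p) (Fin n) ℝ)) (Matrix.fromRows A C))
    (firstBlockCol n K)
  rw [Matrix.rank_eq_rank_iff_ker_eq_of_ker_le (hker ▸ inf_le_left), hker, inf_eq_left,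
    ker_firstBlockCol hn, ← Submodule.comap_comp, ← Submodule.map_le_iff_le_comap]
  change (LinearMap.ker (pencilStack E A B C).mulVecLin).map _ ≤ _ ↔ _
  rw [map_ker_pencilStack E A B C hn, iSup_wongW]
end

section
/- Let E11, A11 ∈ ℝ^{m1×n1}, E12, A12 ∈ ℝ^{m1×m2}, A22 ∈ ℝ^{m2×m2}, C11 ∈ ℝ^{p×n1}, C12 ∈ ℝ^{p×m2}, K11 ∈ ℝ^{r×n1}, K12 ∈ ℝ^{r×m2}, with n := n1 + m2 ≥ 1. Set E = [E11 E12; 0 I_{m2}], A = [A11 A12; 0 A22], C = [C11 C12], K = [K11 K12], Ē = [E; 0] ∈ ℝ^{(m1+m2+p)×n}, Ā = [A; C] ∈ ℝ^{(m1+m2+p)×n}. Then rank F_{n+1,[Ē,Ā]} = rank F_{n+1,[Ē,Ā,K]} if and only if W*_{[E11,A11,0,C11]} ∩ A11⁻¹(im E11) ⊆ ker K11. -/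
open Matrix

/-!
The kernel of `F_{k+1,[M,N]}` consists of the block vectors `(x₀, …, x_k)` with
`M xⱼ + N xⱼ₊₁ = 0` and `x_{k+1} = 0`; reading this recursion backwards from `x_k`, the blocks
`x₁` that occur are exactly the vectors of `W^k_{[M,N,0,0]} ∩ N⁻¹(im M)`. Appending the block row
`K` can only shrink the kernel, so by rank–nullity the two ranks agree iff `K` vanishes on
that space. For the pencil `(Ē, Ā)` the identity block of `Ē` forces the second component of
every vector in `W^k_{[Ē,Ā,0,0]}` to vanish, and the output rows `C` of `Ā` make its first
component, intersected with `ker C₁₁`, equal to `W^k_{[E₁₁,A₁₁,0,C₁₁]}`. Finally an increasing sequence of subspaces of `ℝ^{n₁}` generated by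
iterating a monotone map from `{0}` is stationary from step `n₁` on, so `W^n = W*`.
-/

section Stabilization

variable {K V : Type*} [DivisionRing K] [AddCommGroup V] [Module K V]
  {f : Submodule K V → Submodule K V}

theorem le_finrank_iterate_bot_of_ne [FiniteDimensional K V] (hf : Monotone f) {n : ℕ}
    (h : f^[n] ⊥ ≠ f^[n + 1] ⊥) : n + 1 ≤ Module.finrank K (f^[n + 1] ⊥) := by
  have hmono := hf.monotone_iterate_of_le_map (bot_le (a := f ⊥))
  have hlt : f^[n] ⊥ < f^[n + 1] ⊥ := (hmono n.le_succ).lt_of_ne h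
  induction n with
  | zero =>
    have := Submodule.finrank_lt_finrank_of_lt hlt
    rwa [Function.iterate_zero_apply, finrank_bot] at this
  | succ n ih =>
    -- a repetition at step `n` would propagate to step `n + 1`
    have hne : f^[n] ⊥ ≠ f^[n + 1] ⊥ := fun heq =>
      h (by simpa only [Function.iterate_succ_apply'] using congrArg f heq)
    exact (ih hne ((hmono n.le_succ).lt_of_ne hne)).trans_lt
      (Submodule.finrank_lt_finrank_of_lt hlt)

theorem iterate_bot_eq_iSup_of_finrank_le [FiniteDimensional K V] (hf : Monotone f) {n : ℕ}
    (hn : Module.finrank K V ≤ n) : f^[n] ⊥ = ⨆ i, f^[i] ⊥ := by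
  have hfix : f (f^[n] ⊥) = f^[n] ⊥ := by
    by_contra h
    have := le_finrank_iterate_bot_of_ne hf (n := n)
      (by rwa [Function.iterate_succ_apply', ne_comm])
    have := Submodule.finrank_le (f^[n + 1] ⊥)
    omega
  exact le_antisymm (le_iSup (fun i => f^[i] ⊥) n)
    (iSup_le fun i => (hf.iterate i bot_le).trans (Function.iterate_fixed hfix i).le)

end Stabilization

section WongSequence

variable {R : Type*} [Fintype R] {n l p : ℕ}

theorem WongW_eq_iterate (E A : Matrix R (Fin n) ℝ) (B : Matrix R (Fin l) ℝ)
    (C : Matrix (Fin p) (Fin n) ℝ) (i : ℕ) :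
    WongW E A B C i = (fun W => (W.map A.mulVecLin ⊔ LinearMap.range B.mulVecLin).comap
      E.mulVecLin ⊓ LinearMap.ker C.mulVecLin)^[i] ⊥ := by
  induction i with
  | zero => rfl
  | succ i ih => rw [Function.iterate_succ_apply', ← ih, WongW]

theorem WongW_eq_iSup_of_le (E A : Matrix R (Fin n) ℝ) (B : Matrix R (Fin l) ℝ)
    (C : Matrix (Fin p) (Fin n) ℝ) {k : ℕ} (hk : n ≤ k) :
    WongW E A B C k = ⨆ i, WongW E A B C i := by
  simp only [WongW_eq_iterate]
  refine iterate_bot_eq_iSup_of_finrank_le (fun W W' h => ?_) (by simpa using hk)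
  exact inf_le_inf_right _ (Submodule.comap_mono (sup_le_sup_right (Submodule.map_mono h) _))

end WongSequence

section BlockVectors

variable {S : Type*}

theorem Fin.sum_ite_val_eq {M : Type*} [AddCommMonoid M] {k : ℕ} (j : ℕ) (g : Fin k → M) :
    (∑ i : Fin k, if (i : ℕ) = j then g i else 0) = if h : j < k then g ⟨j, h⟩ else 0 := by
  split_ifs with h
  · rw [Finset.sum_eq_single ⟨j, h⟩ (fun i _ hi => if_neg (fun hij => hi (Fin.ext hij)))
      (by simp)]
    simp
  · exact Finset.sum_eq_zero fun i _ => if_neg (by omega)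

/-- The `j`-th block of a vector indexed by `Fin k × S`; it is `0` for `k ≤ j`, so that the
recursion `M xⱼ + N xⱼ₊₁ = 0` also encodes the last block row of `Fmat k M N`. -/
def vecBlock (k j : ℕ) : (Fin k × S → ℝ) →ₗ[ℝ] S → ℝ where
  toFun x s := if h : j < k then x (⟨j, h⟩, s) else 0
  map_add' x y := by ext s; split_ifs <;> simp
  map_smul' c x := by ext s; split_ifs <;> simp

theorem vecBlock_of_le {k j : ℕ} (h : k ≤ j) (x : Fin k × S → ℝ) : vecBlock k j x = 0 := by
  ext s
  simp [vecBlock, Nat.not_lt.2 h]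

theorem vecBlock_apply_of_lt {k j : ℕ} (h : j < k) (x : Fin k × S → ℝ) (s : S) :
    vecBlock k j x s = x (⟨j, h⟩, s) :=
  dif_pos h

theorem sum_ite_val_fst_eq_dotProduct_vecBlock [Fintype S] {k : ℕ} (j : ℕ) (g : S → ℝ)
    (x : Fin k × S → ℝ) :
    (∑ q : Fin k × S, if (q.1 : ℕ) = j then g q.2 * x q else 0) = g ⬝ᵥ vecBlock k j x := by
  rw [Fintype.sum_prod_type, Finset.sum_comm]
  refine Finset.sum_congr rfl fun s _ => ?_
  rw [Fin.sum_ite_val_eq]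
  simp only [vecBlock, LinearMap.coe_mk, AddHom.coe_mk]
  split_ifs <;> simp

variable [Fintype S] {R : Type*} [Fintype R]

theorem Fmat_mulVec_apply_s17 {k : ℕ} (M N : Matrix R S ℝ) (x : Fin k × S → ℝ) (i : Fin k)
    (t : R) :
    (Fmat k M N *ᵥ x) (i, t) = (M *ᵥ vecBlock k i x + N *ᵥ vecBlock k (i + 1) x) t := by
  have hsplit : ∀ q : Fin k × S, Fmat k M N (i, t) q * x q =
      (if (q.1 : ℕ) = i then M t q.2 * x q else 0) +
        (if (q.1 : ℕ) = i + 1 then N t q.2 * x q else 0) := by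
    rintro ⟨j, s⟩
    simp only [Fmat, of_apply]
    split_ifs <;> first | omega | simp
  simp only [mulVec, dotProduct, hsplit, Finset.sum_add_distrib]
  rw [sum_ite_val_fst_eq_dotProduct_vecBlock, sum_ite_val_fst_eq_dotProduct_vecBlock]
  rfl

theorem FmatK_mulVec {k r : ℕ} (M N : Matrix R S ℝ) (K : Matrix (Fin r) S ℝ)
    (x : Fin k × S → ℝ) :
    FmatK k M N K *ᵥ x = Sum.elim (Fmat k M N *ᵥ x) (K *ᵥ vecBlock k 1 x) := by
  ext (q | i)
  · rfl
  · simp only [mulVec, FmatK, of_apply, Sum.elim_inr, dotProduct, ite_mul, zero_mul]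
    exact sum_ite_val_fst_eq_dotProduct_vecBlock 1 (K i) x

theorem ker_FmatK {k r : ℕ} (M N : Matrix R S ℝ) (K : Matrix (Fin r) S ℝ) :
    LinearMap.ker (FmatK k M N K).mulVecLin =
      LinearMap.ker (Fmat k M N).mulVecLin ⊓
        (LinearMap.ker K.mulVecLin).comap (vecBlock k 1) := by
  ext x
  simp only [LinearMap.mem_ker, Submodule.mem_inf, Submodule.mem_comap, mulVecLin_apply,
    FmatK_mulVec, ← Sum.elim_zero_zero, Sum.elim_eq_iff]

end BlockVectors

section PencilChains

variable {R S : Type*} [Fintype S]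

/-- The Wong sequence `W^i_{[M,N,0,0]}` of the pencil `(M, N)`, for arbitrary index types. -/
def wongChain (M N : Matrix R S ℝ) : ℕ → Submodule ℝ (S → ℝ)
  | 0 => ⊥
  | i + 1 => (wongChain M N i).map N.mulVecLin |>.comap M.mulVecLin

theorem mem_wongChain_succ {M N : Matrix R S ℝ} {i : ℕ} {x : S → ℝ} :
    x ∈ wongChain M N (i + 1) ↔ ∃ y ∈ wongChain M N i, N *ᵥ y = M *ᵥ x := by
  simp [wongChain]

def IsPencilChain (M N : Matrix R S ℝ) (y : ℕ → S → ℝ) : Prop :=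
  ∀ j, M *ᵥ y j + N *ᵥ y (j + 1) = 0

theorem IsPencilChain.cons {M N : Matrix R S ℝ} {y : ℕ → S → ℝ} (hy : IsPencilChain M N y)
    {v : S → ℝ} (hv : M *ᵥ v + N *ᵥ y 0 = 0) : IsPencilChain M N (Stream'.cons v y)
  | 0 => hv
  | j + 1 => hy j

theorem IsPencilChain.mem_wongChain {M N : Matrix R S ℝ} {y : ℕ → S → ℝ}
    (hy : IsPencilChain M N y) {i j : ℕ} (h : y (j + i) = 0) : y j ∈ wongChain M N i := by
  induction i generalizing j with
  | zero => simpa [wongChain] using h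
  | succ i ih =>
    refine mem_wongChain_succ.2 ⟨-y (j + 1), neg_mem (ih (by rwa [Nat.add_right_comm])), ?_⟩
    rw [mulVec_neg, neg_eq_iff_add_eq_zero, add_comm, hy j]

theorem exists_isPencilChain_of_mem_wongChain {M N : Matrix R S ℝ} {i : ℕ} {w : S → ℝ}
    (hw : w ∈ wongChain M N i) :
    ∃ y, IsPencilChain M N y ∧ y 0 = w ∧ ∀ j, i ≤ j → y j = 0 := by
  induction i generalizing w with
  | zero => exact ⟨0, fun _ => by simp, by simpa [wongChain] using hw.symm, fun _ _ => rfl⟩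
  | succ i ih =>
    obtain ⟨v, hv, hvw⟩ := mem_wongChain_succ.1 hw
    obtain ⟨y, hy, hy0, hyi⟩ := ih (neg_mem hv)
    refine ⟨Stream'.cons w y, hy.cons (by rw [hy0, mulVec_neg, hvw, add_neg_cancel]),
      rfl, fun j hj => ?_⟩
    rcases j with _ | j
    · omega
    · exact hyi j (by omega)

theorem mem_ker_Fmat_iff [Fintype R] {k : ℕ} {M N : Matrix R S ℝ} {x : Fin k × S → ℝ} :
    x ∈ LinearMap.ker (Fmat k M N).mulVecLin ↔ IsPencilChain M N (vecBlock k · x) := by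
  rw [LinearMap.mem_ker, mulVecLin_apply]
  constructor
  · intro h j
    by_cases hj : j < k
    · ext t
      simpa [Fmat_mulVec_apply_s17] using congrFun h (⟨j, hj⟩, t)
    · have hkj : k ≤ j := Nat.le_of_not_lt hj
      simp [vecBlock_of_le hkj, vecBlock_of_le (Nat.le_succ_of_le hkj)]
  · intro h
    ext ⟨i, t⟩
    rw [Fmat_mulVec_apply_s17, h i]
    rfl

theorem map_vecBlock_one_ker_Fmat [Fintype R] (M N : Matrix R S ℝ) (k : ℕ) :
    (LinearMap.ker (Fmat (k + 1) M N).mulVecLin).map (vecBlock (k + 1) 1) =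
      wongChain M N k ⊓ (LinearMap.range M.mulVecLin).comap N.mulVecLin := by
  ext w
  simp only [Submodule.mem_map, Submodule.mem_inf, Submodule.mem_comap, LinearMap.mem_range,
    mulVecLin_apply, mem_ker_Fmat_iff]
  constructor
  · rintro ⟨x, hx, rfl⟩
    refine ⟨hx.mem_wongChain (vecBlock_of_le (by omega) x), -vecBlock (k + 1) 0 x, ?_⟩
    rw [mulVec_neg, neg_eq_iff_add_eq_zero, hx 0]
  · rintro ⟨hw, u, hu⟩
    obtain ⟨y, hy, hy0, hyk⟩ := exists_isPencilChain_of_mem_wongChain hw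
    have hchain : IsPencilChain M N (Stream'.cons (-u) y) :=
      hy.cons (by rw [hy0, mulVec_neg, hu, neg_add_cancel])
    have hblocks : ∀ j, vecBlock (k + 1) j (fun q => Stream'.cons (-u) y q.1 q.2) =
        Stream'.cons (-u) y j := by
      intro j
      rcases lt_or_ge j (k + 1) with hj | hj
      · ext s
        exact vecBlock_apply_of_lt hj _ s
      · rcases j with _ | j
        · omega
        · rw [vecBlock_of_le hj]
          exact (hyk j (by omega)).symm
    exact ⟨_, by simpa only [hblocks] using hchain, (hblocks 1).trans hy0⟩

end PencilChains

theorem Matrix.rank_eq_rank_iff_ker_le_of_ker_le {α β S : Type*} [Fintype S]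
    {F : Matrix α S ℝ} {G : Matrix β S ℝ}
    (h : LinearMap.ker G.mulVecLin ≤ LinearMap.ker F.mulVecLin) :
    F.rank = G.rank ↔ LinearMap.ker F.mulVecLin ≤ LinearMap.ker G.mulVecLin := by
  have hF := LinearMap.finrank_range_add_finrank_ker F.mulVecLin
  have hG := LinearMap.finrank_range_add_finrank_ker G.mulVecLin
  rw [Matrix.rank, Matrix.rank]
  refine ⟨fun hr => (Submodule.eq_of_le_of_finrank_eq h (by omega)).ge, fun hle => ?_⟩
  rw [le_antisymm h hle] at hG
  omega

theorem rank_Fmat_eq_rank_FmatK_iff {R S : Type*} [Fintype R] [Fintype S] {r : ℕ}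
    (M N : Matrix R S ℝ) (K : Matrix (Fin r) S ℝ) (k : ℕ) :
    (Fmat (k + 1) M N).rank = (FmatK (k + 1) M N K).rank ↔
      wongChain M N k ⊓ (LinearMap.range M.mulVecLin).comap N.mulVecLin ≤
        LinearMap.ker K.mulVecLin := by
  rw [Matrix.rank_eq_rank_iff_ker_le_of_ker_le (ker_FmatK M N K ▸ inf_le_left), ker_FmatK,
    le_inf_iff, and_iff_right le_rfl, ← Submodule.map_le_iff_le_comap,
    map_vecBlock_one_ker_Fmat]

section Kalman

theorem wongChain_fromRows_inf_ker {R : Type*} [Fintype R] {n l p : ℕ}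
    (E A : Matrix R (Fin n) ℝ) (C : Matrix (Fin p) (Fin n) ℝ) (j : ℕ) :
    wongChain (fromRows E 0) (fromRows A C) j ⊓ LinearMap.ker C.mulVecLin =
      WongW E A (0 : Matrix R (Fin l) ℝ) C j := by
  induction j with
  | zero => simp [wongChain, WongW]
  | succ j ih =>
    ext x
    simp only [Submodule.mem_inf, mem_wongChain_succ, WongW, ← ih]
    simp only [fromRows_mulVec, zero_mulVec, Sum.elim_eq_iff, LinearMap.mem_ker,
      mulVecBilin_apply, mulVecLin_zero, LinearMap.range_zero, bot_le, sup_of_le_left,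
      Submodule.mem_comap, Submodule.mem_map, Submodule.mem_inf, and_assoc, and_congr_left_iff]
    exact fun _ => exists_congr fun _ => by tauto

variable {R S T P : Type*} [Fintype S] [Fintype T] [DecidableEq T]

theorem mem_wongChain_kalman_iff (E11 A11 : Matrix R S ℝ) (E12 A12 : Matrix R T ℝ)
    (A22 : Matrix T T ℝ) (C11 : Matrix P S ℝ) (C12 : Matrix P T ℝ) (j : ℕ)
    (x : S ⊕ T → ℝ) :
    x ∈ wongChain (fromRows (fromBlocks E11 E12 0 1) 0)
        (fromRows (fromBlocks A11 A12 0 A22) (fromCols C11 C12)) j ↔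
      x ∘ Sum.inr = 0 ∧ x ∘ Sum.inl ∈ wongChain (fromRows E11 0) (fromRows A11 C11) j := by
  induction j generalizing x with
  | zero => simp [wongChain, funext_iff, Sum.forall, and_comm]
  | succ j ih =>
    simp only [mem_wongChain_succ, ih, fromRows_mulVec, fromBlocks_mulVec, zero_mulVec,
      zero_add, fromCols_mulVec, one_mulVec, Sum.elim_eq_iff]
    constructor
    · rintro ⟨y, ⟨hy2, hy1⟩, ⟨h1, h2⟩, h3⟩
      rw [hy2, mulVec_zero] at h1 h2 h3
      rw [← h2, mulVec_zero] at h1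
      simp only [add_zero] at h1 h3
      exact ⟨h2.symm, _, hy1, h1, h3⟩
    · rintro ⟨hx2, y1, hy1, h1, h3⟩
      exact ⟨Sum.elim y1 0, by simp [hx2, h1, h3, hy1]⟩

variable {m1 n1 p l r : ℕ}

theorem mem_wongChain_kalman_inf_comap_iff (E11 A11 : Matrix (Fin m1) (Fin n1) ℝ)
    (E12 A12 : Matrix (Fin m1) T ℝ) (A22 : Matrix T T ℝ) (C11 : Matrix (Fin p) (Fin n1) ℝ)
    (C12 : Matrix (Fin p) T ℝ) (k : ℕ) (x : Fin n1 ⊕ T → ℝ) :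
    x ∈ wongChain (fromRows (fromBlocks E11 E12 0 1) 0)
          (fromRows (fromBlocks A11 A12 0 A22) (fromCols C11 C12)) k ⊓
        (LinearMap.range (fromRows (fromBlocks E11 E12 0 1) 0).mulVecLin).comap
          (fromRows (fromBlocks A11 A12 0 A22) (fromCols C11 C12)).mulVecLin ↔
      x ∘ Sum.inr = 0 ∧
        x ∘ Sum.inl ∈ WongW E11 A11 (0 : Matrix (Fin m1) (Fin l) ℝ) C11 k ⊓
          (LinearMap.range E11.mulVecLin).comap A11.mulVecLin := by
  rw [← wongChain_fromRows_inf_ker]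
  simp only [Submodule.mem_inf, mem_wongChain_kalman_iff, Submodule.mem_comap,
    LinearMap.mem_range, mulVecLin_apply, LinearMap.mem_ker, fromRows_mulVec, fromBlocks_mulVec,
    zero_mulVec, one_mulVec, zero_add, fromCols_mulVec, Sum.elim_eq_iff, exists_and_right]
  constructor
  · rintro ⟨⟨hx2, hx1⟩, ⟨u, hu, hu2⟩, hC⟩
    simp only [hx2, mulVec_zero, add_zero] at hu hu2 hC
    rw [hu2, mulVec_zero, add_zero] at hu
    exact ⟨hx2, ⟨hx1, hC.symm⟩, _, hu⟩
  · rintro ⟨hx2, ⟨hx1, hC⟩, u, hu⟩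
    refine ⟨⟨hx2, hx1⟩, ⟨Sum.elim u 0, ?_⟩, ?_⟩ <;> simp [hx2, hu, hC]

theorem kalman_inf_comap_le_ker_iff (E11 A11 : Matrix (Fin m1) (Fin n1) ℝ)
    (E12 A12 : Matrix (Fin m1) T ℝ) (A22 : Matrix T T ℝ) (C11 : Matrix (Fin p) (Fin n1) ℝ)
    (C12 : Matrix (Fin p) T ℝ) (K11 : Matrix (Fin r) (Fin n1) ℝ) (K12 : Matrix (Fin r) T ℝ)
    (k : ℕ) :
    wongChain (fromRows (fromBlocks E11 E12 0 1) 0)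
          (fromRows (fromBlocks A11 A12 0 A22) (fromCols C11 C12)) k ⊓
        (LinearMap.range (fromRows (fromBlocks E11 E12 0 1) 0).mulVecLin).comap
          (fromRows (fromBlocks A11 A12 0 A22) (fromCols C11 C12)).mulVecLin ≤
        LinearMap.ker (fromCols K11 K12).mulVecLin ↔
      WongW E11 A11 (0 : Matrix (Fin m1) (Fin l) ℝ) C11 k ⊓
          (LinearMap.range E11.mulVecLin).comap A11.mulVecLin ≤
        LinearMap.ker K11.mulVecLin := by
  constructor
  · intro h x hx
    simpa using h ((mem_wongChain_kalman_inf_comap_iff E11 A11 E12 A12 A22 C11 C12 k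
      (Sum.elim x 0)).2 ⟨Sum.elim_comp_inr _ _, by simpa using hx⟩)
  · intro h x hx
    obtain ⟨hx2, hx1⟩ := (mem_wongChain_kalman_inf_comap_iff (l := l) _ _ _ _ _ _ _ k x).1 hx
    simpa [hx2] using h hx1

end Kalman

theorem stmt_17_general {m1 n1 m2 p r : ℕ}
    (E11 A11 : Matrix (Fin m1) (Fin n1) ℝ)
    (E12 A12 : Matrix (Fin m1) (Fin m2) ℝ)
    (A22 : Matrix (Fin m2) (Fin m2) ℝ)
    (C11 : Matrix (Fin p) (Fin n1) ℝ) (C12 : Matrix (Fin p) (Fin m2) ℝ)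
    (K11 : Matrix (Fin r) (Fin n1) ℝ) (K12 : Matrix (Fin r) (Fin m2) ℝ)
    (n : ℕ) (hn : n = n1 + m2) :
    (Fmat (n + 1)
        (Matrix.fromRows (Matrix.fromBlocks E11 E12 0 (1 : Matrix (Fin m2) (Fin m2) ℝ))
          (0 : Matrix (Fin p) (Fin n1 ⊕ Fin m2) ℝ))
        (Matrix.fromRows (Matrix.fromBlocks A11 A12 0 A22)
          (Matrix.fromCols C11 C12))).rank =
      (FmatK (n + 1)
        (Matrix.fromRows (Matrix.fromBlocks E11 E12 0 (1 : Matrix (Fin m2) (Fin m2) ℝ))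
          (0 : Matrix (Fin p) (Fin n1 ⊕ Fin m2) ℝ))
        (Matrix.fromRows (Matrix.fromBlocks A11 A12 0 A22)
          (Matrix.fromCols C11 C12))
        (Matrix.fromCols K11 K12)).rank ↔
    (⨆ i, WongW E11 A11 (0 : Matrix (Fin m1) (Fin 1) ℝ) C11 i) ⊓
        Submodule.comap A11.mulVecLin (LinearMap.range E11.mulVecLin) ≤
      LinearMap.ker K11.mulVecLin := by
  rw [rank_Fmat_eq_rank_FmatK_iff, kalman_inf_comap_le_ker_iff (l := 1),
    WongW_eq_iSup_of_le _ _ _ _ (hn ▸ Nat.le_add_right n1 m2)]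

/-- With the Kalman decomposition notation, `rank F_{n+1,[Ē,Ā]} = rank F_{n+1,[Ē,Ā,K]}`
iff `W*_{[E11,A11,0,C11]} ∩ A11⁻¹(im E11) ⊆ ker K11`. -/
theorem stmt_17 {m1 n1 m2 p r : ℕ}
    (E11 A11 : Matrix (Fin m1) (Fin n1) ℝ)
    (E12 A12 : Matrix (Fin m1) (Fin m2) ℝ)
    (A22 : Matrix (Fin m2) (Fin m2) ℝ)
    (C11 : Matrix (Fin p) (Fin n1) ℝ) (C12 : Matrix (Fin p) (Fin m2) ℝ)
    (K11 : Matrix (Fin r) (Fin n1) ℝ) (K12 : Matrix (Fin r) (Fin m2) ℝ)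
    (n : ℕ) (hn : n = n1 + m2) (hn1 : 1 ≤ n) :
    (Fmat (n + 1)
        (Matrix.fromRows (Matrix.fromBlocks E11 E12 0 (1 : Matrix (Fin m2) (Fin m2) ℝ))
          (0 : Matrix (Fin p) (Fin n1 ⊕ Fin m2) ℝ))
        (Matrix.fromRows (Matrix.fromBlocks A11 A12 0 A22)
          (Matrix.fromCols C11 C12))).rank =
      (FmatK (n + 1)
        (Matrix.fromRows (Matrix.fromBlocks E11 E12 0 (1 : Matrix (Fin m2) (Fin m2) ℝ))
          (0 : Matrix (Fin p) (Fin n1 ⊕ Fin m2) ℝ))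
        (Matrix.fromRows (Matrix.fromBlocks A11 A12 0 A22)
          (Matrix.fromCols C11 C12))
        (Matrix.fromCols K11 K12)).rank ↔
    (⨆ i, WongW E11 A11 (0 : Matrix (Fin m1) (Fin 1) ℝ) C11 i) ⊓
        Submodule.comap A11.mulVecLin (LinearMap.range E11.mulVecLin) ≤
      LinearMap.ker K11.mulVecLin :=
  stmt_17_general E11 A11 E12 A12 A22 C11 C12 K11 K12 n hn
end
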